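/- Let κ(x₁,…,x_d) be a symmetric d-linear form on 𝔽_p^n of analytic rank at least r. For each proper subset I ⊊ {1,…,d}, let f_I : (𝔽_p^n)^d → ℂ be a function depending only on the coordinates xᵢ with i ∈ I, with ‖f_I‖_∞ ≤ 1. Then |𝔼_{x∈(𝔽_p^n)^d} ω^{κ(x)} ∏_{I⊊[d]} f_I(x)| ≤ p^{-r/2^{d-1}}. -/

import Mathlib

open Finset

/-- The additive character `t ↦ exp(2πi t / p)` on `ZMod p`. -/
noncomputable def e (p : ℕ) (t : ZMod p) : ℂ :=
  Complex.exp (2 * Real.pi * Complex.I * (t.val : ℂ) / (p : ℂ))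

/-!
Repeated Cauchy–Schwarz, one coordinate at a time. Write `φ x = ψ (κ x)` and pick `i ∈ J`.
Averaging over `xᵢ`, the factors `f_I` with `i ∉ I` do not depend on `xᵢ` and are discarded by
Cauchy–Schwarz; expanding the square turns each remaining `f_I` (`i ∈ I`) into a product of two
shifted copies, which still depends only on the coordinates in `I`, while multilinearity of `κ`
turns the two phases back into a single `φ`. Each step squares the exponent and removes one
coordinate from `J`. At the last coordinate `c` no `f_I` depends on `x_c`, and the average of
`u ↦ φ (update x c u)`, an additive character of `u`, is `0` or `1`; this gives the exponent
`2 ^ (d - 1)` rather than `2 ^ d`.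
-/

open Function
open scoped BigOperators ComplexConjugate

lemma pow_expect_le_of_forall_pow_le {α : Type*} [Fintype α] [Nonempty α] {f : α → ℝ}
    (hf : ∀ a, 0 ≤ f a) {B : ℝ} (n : ℕ) (hB : ∀ a, f a ^ n ≤ B) : (𝔼 a, f a) ^ n ≤ B := by
  obtain ⟨a, -, ha⟩ := exists_le_of_le_expect (f := f) univ_nonempty le_rfl
  exact (pow_le_pow_left₀ (expect_nonneg fun a _ ↦ hf a) ha n).trans (hB a)

lemma le_rpow_neg_div_of_pow_le {a b r : ℝ} {N : ℕ} (ha : 0 ≤ a) (hb : 0 ≤ b) (hN : N ≠ 0)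
    (h : a ^ N ≤ b ^ (-r)) : a ≤ b ^ (-(r / N)) :=
  calc a = (a ^ N) ^ (N : ℝ)⁻¹ := (Real.pow_rpow_inv_natCast ha hN).symm
    _ ≤ (b ^ (-r)) ^ (N : ℝ)⁻¹ := Real.rpow_le_rpow (by positivity) h (by positivity)
    _ = b ^ (-(r / N)) := by rw [← Real.rpow_mul hb, neg_mul, div_eq_mul_inv]

section Averaging

variable {ι : Type*} [DecidableEq ι] {V : ι → Type*}

lemma prod_apply_update_eq_of_notMem {M : Type*} [CommMonoid M] {𝓘 : Finset (Finset ι)}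
    {f : Finset ι → (∀ j, V j) → M} {i : ι} (hi : ∀ I ∈ 𝓘, i ∉ I)
    (hdep : ∀ I ∈ 𝓘, DependsOn (f I) I) (x : ∀ j, V j) (u : V i) :
    ∏ I ∈ 𝓘, f I (update x i u) = ∏ I ∈ 𝓘, f I x :=
  prod_congr rfl fun I hI ↦ hdep I hI fun _ hj ↦
    update_of_ne (ne_of_mem_of_not_mem (mem_coe.1 hj) (hi I hI)) _ _

variable [Fintype ι] [∀ i, Fintype (V i)] [∀ i, Nonempty (V i)]

lemma expect_expect_update {M : Type*} [AddCommMonoid M] [Module ℚ≥0 M]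
    (H : (∀ j, V j) → M) (i : ι) :
    𝔼 x, 𝔼 u, H (update x i u) = 𝔼 x, H x := by
  have hinv : Involutive fun z : (∀ j, V j) × V i ↦ (update z.1 i z.2, z.1 i) := by
    rintro ⟨x, u⟩
    simp
  calc 𝔼 x, 𝔼 u, H (update x i u) = 𝔼 z : (∀ j, V j) × V i, H (update z.1 i z.2) := by
        rw [← univ_product_univ, expect_product]
    _ = 𝔼 z : (∀ j, V j) × V i, H z.1 :=
        Fintype.expect_equiv hinv.toPerm _ _ fun _ ↦ rfl
    _ = 𝔼 x, H x := by
        rw [← univ_product_univ, expect_product]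
        simp only [Fintype.expect_const]

lemma expect_mul_eq_expect_mul_expect_update {M : Type*} [CommSemiring M] [Module ℚ≥0 M]
    [SMulCommClass ℚ≥0 M M] {g : (∀ j, V j) → M} (k : (∀ j, V j) → M) (i : ι)
    (hg : ∀ x u, g (update x i u) = g x) :
    𝔼 x, k x * g x = 𝔼 x, g x * 𝔼 u, k (update x i u) := by
  rw [← expect_expect_update (fun x ↦ k x * g x) i]
  simp_rw [hg, mul_expect, mul_comm]

end Averaging

section AddCharMultilinear

variable {ι R : Type*} [DecidableEq ι] [CommRing R] {V : ι → Type*}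
  [∀ i, AddCommGroup (V i)] [∀ i, Module R (V i)] (ψ : AddChar R ℂ) (κ : MultilinearMap R V R)

lemma addChar_map_update_add_mul_conj [Finite R] (x : ∀ j, V j) (i : ι) (v w : V i) :
    ψ (κ (update x i (v + w))) * conj (ψ (κ (update x i v))) = ψ (κ (update x i w)) := by
  rw [← AddChar.map_neg_eq_conj, ← AddChar.map_add_eq_mul, κ.map_update_add]
  congr 1
  abel

variable [∀ i, Fintype (V i)]

lemma expect_addChar_update_eq_ofReal_norm (x : ∀ j, V j) (i : ι) :
    𝔼 u, ψ (κ (update x i u)) = (‖𝔼 u, ψ (κ (update x i u))‖ : ℂ) := by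
  classical
  have := (ψ.compAddMonoidHom (κ.toLinearMap x i).toAddMonoidHom).expect_eq_ite
  simp only [AddChar.compAddMonoidHom_apply, LinearMap.toAddMonoidHom_coe,
    MultilinearMap.toLinearMap_apply] at this
  rw [this]
  split_ifs <;> simp

variable [Fintype ι]

lemma norm_expect_addChar_mul_le (i : ι) {g : (∀ j, V j) → ℂ}
    (hg : ∀ x u, g (update x i u) = g x) (hg1 : ∀ x, ‖g x‖ ≤ 1) :
    ‖𝔼 x, ψ (κ x) * g x‖ ≤ ‖𝔼 x, ψ (κ x)‖ := by
  set t : (∀ j, V j) → ℂ := fun x ↦ 𝔼 u, ψ (κ (update x i u))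
  have hnorm : 𝔼 x, ‖t x‖ = ‖𝔼 x, ψ (κ x)‖ := by
    rw [← expect_expect_update (fun x ↦ ψ (κ x)) i, expect_congr rfl fun x _ ↦
      expect_addChar_update_eq_ofReal_norm ψ κ x i, ← Complex.ofReal_expect,
      Complex.norm_of_nonneg (expect_nonneg fun _ _ ↦ norm_nonneg _)]
  calc ‖𝔼 x, ψ (κ x) * g x‖ = ‖𝔼 x, g x * t x‖ := by
        rw [expect_mul_eq_expect_mul_expect_update _ i hg]
    _ ≤ 𝔼 x, ‖g x * t x‖ := RCLike.norm_expect_le (K := ℂ)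
    _ ≤ 𝔼 x, ‖t x‖ := expect_le_expect fun x _ ↦ by
        rw [norm_mul]
        exact mul_le_of_le_one_left (norm_nonneg _) (hg1 x)
    _ = ‖𝔼 x, ψ (κ x)‖ := hnorm

lemma sq_norm_expect_addChar_mul_le [Finite R] (i : ι) (h : (∀ j, V j) → ℂ)
    {g : (∀ j, V j) → ℂ} (hg : ∀ x u, g (update x i u) = g x) (hg1 : ∀ x, ‖g x‖ ≤ 1) :
    ‖𝔼 x, ψ (κ x) * (h x * g x)‖ ^ 2 ≤
      𝔼 v, ‖𝔼 y, ψ (κ y) * (h (update y i (v + y i)) * conj (h (update y i v)))‖ := by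
  set Φ : (∀ j, V j) → ℂ := fun x ↦ 𝔼 u, ψ (κ (update x i u)) * h (update x i u)
  set D : V i → (∀ j, V j) → ℂ :=
    fun v y ↦ ψ (κ y) * (h (update y i (v + y i)) * conj (h (update y i v)))
  -- expand `Φ x * conj (Φ x)` as a double average over `u = v + w` and `v`
  have hΦ : ∀ x, ((‖Φ x‖ ^ 2 : ℝ) : ℂ) = 𝔼 v, 𝔼 w, D v (update x i w) := by
    intro x
    rw [Complex.ofReal_pow, ← Complex.mul_conj', map_expect (starRingEnd ℂ),
      Fintype.expect_mul_expect, expect_comm]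
    refine expect_congr rfl fun v _ ↦ (Fintype.expect_equiv (Equiv.addLeft v) _ _ fun w ↦ ?_).symm
    simp only [D, update_idem, update_self, map_mul, Equiv.coe_addLeft]
    rw [← addChar_map_update_add_mul_conj ψ κ x i v w]
    ring
  have hsq : 𝔼 x, ‖Φ x‖ ^ 2 = ‖𝔼 v, 𝔼 y, D v y‖ := by
    rw [← Complex.norm_of_nonneg (expect_nonneg fun x _ ↦ sq_nonneg ‖Φ x‖),
      Complex.ofReal_expect]
    simp_rw [hΦ]
    rw [expect_comm]
    simp_rw [expect_expect_update (D _) i]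
  calc ‖𝔼 x, ψ (κ x) * (h x * g x)‖ ^ 2 = ‖𝔼 x, g x * Φ x‖ ^ 2 := by
        simp_rw [← mul_assoc]
        exact congrArg (‖·‖ ^ 2)
          (expect_mul_eq_expect_mul_expect_update (fun x ↦ ψ (κ x) * h x) i hg)
    _ ≤ (𝔼 x, ‖Φ x‖) ^ 2 := by
        gcongr
        refine (RCLike.norm_expect_le (K := ℂ)).trans (expect_le_expect fun x _ ↦ ?_)
        rw [norm_mul]
        exact mul_le_of_le_one_left (norm_nonneg _) (hg1 x)
    _ ≤ 𝔼 x, ‖Φ x‖ ^ 2 := by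
        simpa using expect_mul_sq_le_sq_mul_sq univ (fun x ↦ ‖Φ x‖) 1
    _ = ‖𝔼 v, 𝔼 y, D v y‖ := hsq
    _ ≤ 𝔼 v, ‖𝔼 y, D v y‖ := RCLike.norm_expect_le (K := ℂ)

theorem norm_expect_addChar_mul_prod_pow_le [Finite R] (J : Finset ι)
    {𝓘 : Finset (Finset ι)} (h𝓘 : ∀ I ∈ 𝓘, ¬ J ⊆ I) {f : Finset ι → (∀ j, V j) → ℂ}
    (hdep : ∀ I ∈ 𝓘, DependsOn (f I) I) (hbd : ∀ I ∈ 𝓘, ∀ x, ‖f I x‖ ≤ 1) :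
    ‖𝔼 x, ψ (κ x) * ∏ I ∈ 𝓘, f I x‖ ^ 2 ^ (#J - 1) ≤ ‖𝔼 x, ψ (κ x)‖ := by
  induction J using Finset.cons_induction generalizing 𝓘 f with
  | empty =>
    obtain rfl : 𝓘 = ∅ := eq_empty_of_forall_notMem fun I hI ↦ h𝓘 I hI (empty_subset I)
    simp
  | cons i J hiJ ih =>
    have hprod_le_one : ∀ 𝓘' ⊆ 𝓘, ∀ x, ‖∏ I ∈ 𝓘', f I x‖ ≤ 1 := fun 𝓘' h𝓘' x ↦
      (norm_prod _ _).trans_le (prod_le_one (fun _ _ ↦ norm_nonneg _) fun I hI ↦ hbd I (h𝓘' hI) x)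
    rcases J.eq_empty_or_nonempty with rfl | hJ
    · have hi : ∀ I ∈ 𝓘, i ∉ I := fun I hI hiI ↦ h𝓘 I hI (by simpa using hiI)
      simpa using norm_expect_addChar_mul_le ψ κ i (prod_apply_update_eq_of_notMem hi hdep)
        (hprod_le_one 𝓘 subset_rfl)
    have hcs := sq_norm_expect_addChar_mul_le ψ κ i (fun x ↦ ∏ I ∈ 𝓘 with i ∈ I, f I x)
      (prod_apply_update_eq_of_notMem (fun I hI ↦ (mem_filter.1 hI).2)
        fun I hI ↦ hdep I (mem_filter.1 hI).1) (hprod_le_one _ (filter_subset _ _))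
    simp only [prod_filter_mul_prod_filter_not, map_prod, ← prod_mul_distrib] at hcs
    have hexp : 2 ^ (#(J.cons i hiJ) - 1) = 2 * 2 ^ (#J - 1) := by
      rw [card_cons, Nat.add_sub_cancel, ← pow_succ', Nat.sub_add_cancel hJ.card_pos]
    rw [hexp, pow_mul]
    refine (pow_le_pow_left₀ (sq_nonneg _) hcs _).trans
      (pow_expect_le_of_forall_pow_le (fun _ ↦ norm_nonneg _) _ fun v ↦ ih ?_ ?_ ?_)
    · intro I hI hJI
      obtain ⟨hI, hiI⟩ := mem_filter.1 hI
      exact h𝓘 I hI (cons_subset.2 ⟨hiI, hJI⟩)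
    · intro I hI x y hxy
      obtain ⟨hI, hiI⟩ := mem_filter.1 hI
      have hupdate : ∀ a : V i, f I (update x i a) = f I (update y i a) := fun a ↦
        hdep I hI fun j hj ↦ by
          rcases eq_or_ne j i with rfl | hji
          · simp
          · simp [update_of_ne hji, hxy j hj]
      simp only [hxy i hiI, hupdate]
    · intro I hI x
      rw [norm_mul, Complex.norm_conj]
      exact mul_le_one₀ (hbd I (mem_filter.1 hI).1 _) (norm_nonneg _) (hbd I (mem_filter.1 hI).1 _)

end AddCharMultilinear

lemma e_eq_stdAddChar (p : ℕ) [NeZero p] (t : ZMod p) : e p t = ZMod.stdAddChar t := by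
  rw [ZMod.stdAddChar_apply, ZMod.toCircle_apply, e]

theorem stmt10_general (p n d : ℕ) [Fact p.Prime]
    (κ : MultilinearMap (ZMod p) (fun _ : Fin d => (Fin n → ZMod p)) (ZMod p))
    (r : ℝ)
    (hrank : ‖(∑ x : Fin d → (Fin n → ZMod p), e p (κ x))
        / (Fintype.card (Fin d → (Fin n → ZMod p)) : ℂ)‖ ≤ (p : ℝ) ^ (-r))
    (f : Finset (Fin d) → ((Fin d → (Fin n → ZMod p)) → ℂ))
    (hdep : ∀ I : Finset (Fin d), I ≠ Finset.univ →
      ∀ x y : Fin d → (Fin n → ZMod p), (∀ i ∈ I, x i = y i) → f I x = f I y)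
    (hbd : ∀ I : Finset (Fin d), I ≠ Finset.univ →
      ∀ x, ‖f I x‖ ≤ 1) :
    ‖(∑ x : Fin d → (Fin n → ZMod p),
        e p (κ x) * ∏ I ∈ Finset.univ.filter (· ≠ (Finset.univ : Finset (Fin d))), f I x)
      / (Fintype.card (Fin d → (Fin n → ZMod p)) : ℂ)‖
      ≤ (p : ℝ) ^ (-(r / 2 ^ (d - 1))) := by
  simp only [← Fintype.expect_eq_sum_div_card, e_eq_stdAddChar] at hrank ⊢
  have hbound := norm_expect_addChar_mul_prod_pow_le ZMod.stdAddChar κ univ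
    (𝓘 := univ.filter (· ≠ univ)) (fun I hI ↦ by simpa [univ_subset_iff] using hI)
    (fun I hI x y hxy ↦ hdep I (mem_filter.1 hI).2 x y hxy) (fun I hI ↦ hbd I (mem_filter.1 hI).2)
  rw [card_univ, Fintype.card_fin] at hbound
  exact_mod_cast le_rpow_neg_div_of_pow_le (norm_nonneg _) (Nat.cast_nonneg p)
    (pow_ne_zero _ two_ne_zero) (hbound.trans hrank)

/-- let `κ` be a symmetric `d`-linear form on `𝔽_p^n` of analytic
rank at least `r` (i.e. `|𝔼_x ω^{κ(x)}| ≤ p^{-r}`). For each proper subset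
`I ⊊ [d]` let `f_I : (𝔽_p^n)^d → ℂ` depend only on the coordinates in `I` and be
bounded by 1. Then `|𝔼_x ω^{κ(x)} ∏_{I⊊[d]} f_I(x)| ≤ p^{-r/2^{d-1}}`. -/
theorem stmt10 (p n d : ℕ) [Fact p.Prime]
    (κ : MultilinearMap (ZMod p) (fun _ : Fin d => (Fin n → ZMod p)) (ZMod p))
    (hsymm : ∀ (σ : Equiv.Perm (Fin d)) (x : Fin d → (Fin n → ZMod p)),
      κ (x ∘ σ) = κ x)
    (r : ℝ)
    (hrank : ‖(∑ x : Fin d → (Fin n → ZMod p), e p (κ x))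
        / (Fintype.card (Fin d → (Fin n → ZMod p)) : ℂ)‖ ≤ (p : ℝ) ^ (-r))
    (f : Finset (Fin d) → ((Fin d → (Fin n → ZMod p)) → ℂ))
    (hdep : ∀ I : Finset (Fin d), I ≠ Finset.univ →
      ∀ x y : Fin d → (Fin n → ZMod p), (∀ i ∈ I, x i = y i) → f I x = f I y)
    (hbd : ∀ I : Finset (Fin d), I ≠ Finset.univ →
      ∀ x, ‖f I x‖ ≤ 1) :
    ‖(∑ x : Fin d → (Fin n → ZMod p),
        e p (κ x) * ∏ I ∈ Finset.univ.filter (· ≠ (Finset.univ : Finset (Fin d))), f I x)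
      / (Fintype.card (Fin d → (Fin n → ZMod p)) : ℂ)‖
      ≤ (p : ℝ) ^ (-(r / 2 ^ (d - 1))) :=
  stmt10_general p n d κ r hrank f hdep hbd
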